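/- Let X be an A–B imprimitivity bimodule, let π : B → B(H) be a representation of B on a Hilbert space H, and let x ∈ X. Then π(⟨x,x⟩_B) ≠ 0 if and only if (X-Ind π)(⟨x,x⟩_A) ≠ 0. -/
import Mathlib


noncomputable section

open scoped ComplexInnerProductSpace ENNReal

/-- A bundled complex Hilbert space. -/
structure HilbertBundle : Type 1 where
  carrier : Type
  [nacg : NormedAddCommGroup carrier]
  [ips : InnerProductSpace ℂ carrier]
  [cs : CompleteSpace carrier]

attribute [instance] HilbertBundle.nacg HilbertBundle.ips HilbertBundle.cs

/-- A representation of a (possibly non-unital) C⋆-algebra on a Hilbert space, i.e. a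
⋆-homomorphism into the bounded operators. -/
structure CStarRep (B : Type) [NonUnitalCStarAlgebra B] : Type 1 where
  space : HilbertBundle
  π : B →⋆ₙₐ[ℂ] (space.carrier →L[ℂ] space.carrier)

/-- An `A`–`B` imprimitivity bimodule: a complex vector space `X` which is a full left Hilbert
`A`-module and a full right Hilbert `B`-module, with commuting actions, satisfying
`⟨x,y⟩_A ⬝ z = x ⬝ ⟨y,z⟩_B`.  The `A`-valued inner product is linear in the first variable and
the `B`-valued one in the second.  `X` is complete for the norm `‖x‖ = ‖⟨x,x⟩_B‖^{1/2}`
(which coincides with `‖⟨x,x⟩_A‖^{1/2}`). -/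
structure ImprimitivityBimodule (A B : Type) [NonUnitalCStarAlgebra A]
    [NonUnitalCStarAlgebra B] : Type 1 where
  X : Type
  [nacg : NormedAddCommGroup X]
  [nsp : NormedSpace ℂ X]
  [cs : CompleteSpace X]
  smulA : A → X → X
  smulB : X → B → X
  innA : X → X → A
  innB : X → X → B
  -- `X` is a left `A`-module
  smulA_add : ∀ a x y, smulA a (x + y) = smulA a x + smulA a y
  add_smulA : ∀ a a' x, smulA (a + a') x = smulA a x + smulA a' x
  mul_smulA : ∀ a a' x, smulA (a * a') x = smulA a (smulA a' x)
  smulA_smul : ∀ (c : ℂ) a x, smulA (c • a) x = c • smulA a x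
  smulA_smul' : ∀ (c : ℂ) a x, smulA a (c • x) = c • smulA a x
  -- `X` is a right `B`-module
  smulB_add : ∀ x y b, smulB (x + y) b = smulB x b + smulB y b
  smulB_add' : ∀ x b b', smulB x (b + b') = smulB x b + smulB x b'
  smulB_mul : ∀ x b b', smulB x (b * b') = smulB (smulB x b) b'
  smulB_smul : ∀ (c : ℂ) x b, smulB x (c • b) = c • smulB x b
  smulB_smul' : ∀ (c : ℂ) x b, smulB (c • x) b = c • smulB x b
  -- the two actions commute
  smul_commutes : ∀ a x b, smulB (smulA a x) b = smulA a (smulB x b)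
  -- the `A`-valued inner product (linear in the first variable)
  innA_add : ∀ x y z, innA (x + y) z = innA x z + innA y z
  innA_add' : ∀ x y z, innA x (y + z) = innA x y + innA x z
  innA_smul : ∀ (c : ℂ) x y, innA (c • x) y = c • innA x y
  innA_star : ∀ x y, star (innA x y) = innA y x
  innA_smulA : ∀ a x y, innA (smulA a x) y = a * innA x y
  innA_pos : ∀ x, ∃ a, innA x x = star a * a
  innA_definite : ∀ x, innA x x = 0 → x = 0
  -- the `B`-valued inner product (linear in the second variable)
  innB_add : ∀ x y z, innB (x + y) z = innB x z + innB y z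
  innB_add' : ∀ x y z, innB x (y + z) = innB x y + innB x z
  innB_smul : ∀ (c : ℂ) x y, innB x (c • y) = c • innB x y
  innB_star : ∀ x y, star (innB x y) = innB y x
  innB_smulB : ∀ x y b, innB x (smulB y b) = innB x y * b
  innB_pos : ∀ x, ∃ b, innB x x = star b * b
  innB_definite : ∀ x, innB x x = 0 → x = 0
  -- the norm on `X` is the Hilbert-module norm for both inner products
  norm_innA : ∀ x, ‖x‖ ^ 2 = ‖innA x x‖
  norm_innB : ∀ x, ‖x‖ ^ 2 = ‖innB x x‖
  -- fullness of both inner products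
  full_innA : closure (Submodule.span ℂ {a : A | ∃ x y, a = innA x y} : Set A) = Set.univ
  full_innB : closure (Submodule.span ℂ {b : B | ∃ x y, b = innB x y} : Set B) = Set.univ
  -- the imprimitivity condition `⟨x,y⟩_A ⬝ z = x ⬝ ⟨y,z⟩_B`
  imprimitivity : ∀ x y z, smulA (innA x y) z = smulB x (innB y z)

attribute [instance] ImprimitivityBimodule.nacg ImprimitivityBimodule.nsp
  ImprimitivityBimodule.cs
/-- A realization of the induced representation `X-Ind π` of `A` on `X ⊗_B H`, given an
`A`–`B` imprimitivity bimodule `X` and a representation `π` of `B` on `H`.  The map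
`t x h = x ⊗ h` is bilinear, `B`-balanced, has dense range span, satisfies the pre-inner
product identity `(x ⊗ h | y ⊗ k) = (π(⟨y,x⟩_B) h | k)` (written below in Mathlib's
convention, where the inner product is conjugate-linear in the first variable), and
intertwines the `A`-actions: `(X-Ind π)(a)(x ⊗ h) = (a⬝x) ⊗ h`. -/
structure InducedRepWitness {A B : Type} [NonUnitalCStarAlgebra A] [NonUnitalCStarAlgebra B]
    (E : ImprimitivityBimodule A B) (ρ : CStarRep B) (ρ' : CStarRep A) : Type 1 where
  t : E.X → ρ.space.carrier → ρ'.space.carrier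
  t_add_left : ∀ x y h, t (x + y) h = t x h + t y h
  t_add_right : ∀ x h k, t x (h + k) = t x h + t x k
  t_smul_left : ∀ (c : ℂ) x h, t (c • x) h = c • t x h
  t_smul_right : ∀ (c : ℂ) x h, t x (c • h) = c • t x h
  t_balanced : ∀ x b h, t (E.smulB x b) h = t x (ρ.π b h)
  t_inner : ∀ x y h k, ⟪t y k, t x h⟫ = ⟪k, ρ.π (E.innB y x) h⟫
  t_dense : closure (Submodule.span ℂ {v : ρ'.space.carrier | ∃ x h, v = t x h} :
      Set ρ'.space.carrier) = Set.univ
  t_intertwine : ∀ a x h, ρ'.π a (t x h) = t (E.smulA a x) h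
/-- Let `X` be an `A`–`B` imprimitivity bimodule, `π : B → B(H)` a
representation of `B`, and `x ∈ X`.  Then `π(⟨x,x⟩_B) ≠ 0` if and only if
`(X-Ind π)(⟨x,x⟩_A) ≠ 0`. -/
theorem inducedRep_inner_ne_zero_iff {A B : Type}
    [NonUnitalCStarAlgebra A] [NonUnitalCStarAlgebra B]
    (E : ImprimitivityBimodule A B) (ρ : CStarRep B) (ρ' : CStarRep A)
    (W : InducedRepWitness E ρ ρ') (x : E.X) :
    ρ.π (E.innB x x) ≠ 0 ↔ ρ'.π (E.innA x x) ≠ 0 := by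
  have hbself : star (E.innB x x) = E.innB x x := E.innB_star x x
  have L1 : ρ'.π (E.innA x x) = 0 → ρ.π (E.innB x x) = 0 := by
    intro ha
    ext h
    simp only [ContinuousLinearMap.zero_apply]
    have h1 : W.t x (ρ.π (E.innB x x) h) = 0 := by
      have h0 := W.t_intertwine (E.innA x x) x h
      rw [ha] at h0
      simp only [ContinuousLinearMap.zero_apply] at h0
      rw [E.imprimitivity, W.t_balanced] at h0
      exact h0.symm
    have h2 : (⟪W.t x h, W.t x (ρ.π (E.innB x x) h)⟫ : ℂ) = 0 := by
      rw [h1]; simp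
    rw [W.t_inner x x (ρ.π (E.innB x x) h) h] at h2
    have hsa : ContinuousLinearMap.adjoint (ρ.π (E.innB x x)) = ρ.π (E.innB x x) := by
      rw [← ContinuousLinearMap.star_eq_adjoint, ← map_star, hbself]
    rw [← hsa, ContinuousLinearMap.adjoint_inner_right, hsa] at h2
    exact inner_self_eq_zero.mp h2
  have L2 : ρ.π (E.innB x x) = 0 → ρ'.π (E.innA x x) = 0 := by
    intro hb
    have htx : ∀ k, W.t x k = 0 := by
      intro k
      have h3 : (⟪W.t x k, W.t x k⟫ : ℂ) = 0 := by
        rw [W.t_inner x x k k, hb]; simp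
      exact inner_self_eq_zero.mp h3
    have hgen : ∀ y h, ρ'.π (E.innA x x) (W.t y h) = 0 := by
      intro y h
      rw [W.t_intertwine, E.imprimitivity, W.t_balanced, htx]
    ext v
    simp only [ContinuousLinearMap.zero_apply]
    have hset : (Submodule.span ℂ {v : ρ'.space.carrier | ∃ y h, v = W.t y h} : Set _)
        ⊆ {v | ρ'.π (E.innA x x) v = 0} := by
      intro v hv
      induction hv using Submodule.span_induction with
      | mem w hw => obtain ⟨y, h, rfl⟩ := hw; exact hgen y h
      | zero => simp
      | add a b _ _ h1 h2 =>
          simp only [Set.mem_setOf_eq] at h1 h2 ⊢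
          rw [map_add, h1, h2, add_zero]
      | smul c a _ h1 =>
          simp only [Set.mem_setOf_eq] at h1 ⊢
          rw [map_smul, h1, smul_zero]
    have hcl : IsClosed {v : ρ'.space.carrier | ρ'.π (E.innA x x) v = 0} :=
      isClosed_eq (ρ'.π (E.innA x x)).continuous continuous_const
    have hsub := closure_minimal hset hcl
    rw [W.t_dense] at hsub
    exact hsub (Set.mem_univ v)
  exact ⟨fun hb ha => hb (L1 ha), fun ha hb => ha (L2 hb)⟩
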